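/- arXiv:2112.13579 — 2 statements merged into one kernel-verified Lean document; each statement's English description precedes it below -/
import Mathlib

section
/- Let Ω = 𝕋 × ℝ. There is a constant C such that for any f, g, h ∈ L²(Ω) with ∂₁f ∈ L²(Ω) and ∂₂g ∈ L²(Ω), |∫_Ω f g h dx| ≤ C ‖f‖_{L²}^{1/2} (‖f‖_{L²} + ‖∂₁f‖_{L²})^{1/2} ‖g‖_{L²}^{1/2} ‖∂₂g‖_{L²}^{1/2} ‖h‖_{L²}. -/
open MeasureTheory Set

/-- The measure on Ω = 𝕋 × ℝ (with 𝕋 = [0,1] the 1D periodic box), modeled as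
Lebesgue measure on the fundamental strip (0,1] × ℝ ⊆ ℝ². Functions on Ω are
modeled as functions on ℝ² that are 1-periodic in the first variable. -/
noncomputable def μΩ : Measure (ℝ × ℝ) := (volume.restrict (Set.Ioc (0:ℝ) 1)).prod volume

/-- The horizontal average f̄(x₂) = ∫_𝕋 f(x₁, x₂) dx₁. -/
noncomputable def havg (f : ℝ × ℝ → ℝ) (y : ℝ) : ℝ := ∫ t in (0:ℝ)..1, f (t, y)

/-- The oscillation part f̃ = f − f̄. -/
noncomputable def osc (f : ℝ × ℝ → ℝ) (x : ℝ × ℝ) : ℝ := f x - havg f x.2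

open Interval

/-! On every horizontal line, periodicity and the fundamental theorem of calculus applied to `f²`
bound `sup_{x₁} f²` by `a(x₂) = ∫_𝕋 (f² + 2|f ∂₁f|) dx₁`; on every vertical line, `g²` tends to
`0` at `-∞`, which bounds `sup_{x₂} g²` by `b(x₁) = ∫_ℝ 2|g ∂₂g| dx₂`. So `|fg| ≤ √(b(x₁) a(x₂))`,
a function whose `L²(Ω)` norm factorizes as
`(∫ b · ∫ a)^{1/2} ≤ (2‖g‖‖∂₂g‖ · 2‖f‖(‖f‖ + ‖∂₁f‖))^{1/2}`,
and Cauchy–Schwarz against `h` gives the bound with `C = 2`. -/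

section L2
variable {α : Type*} [MeasurableSpace α] {μ : Measure α} {f g : α → ℝ}

theorem toReal_eLpNorm_two_eq_sqrt (hf : AEStronglyMeasurable f μ) :
    (eLpNorm f 2 μ).toReal = √(∫ x, f x ^ 2 ∂μ) := by
  rw [toReal_eLpNorm hf, lpNorm_eq_integral_norm_rpow_toReal two_ne_zero ENNReal.ofNat_ne_top hf,
    Real.sqrt_eq_rpow]
  simp [one_div]

theorem sq_toReal_eLpNorm_two (hf : AEStronglyMeasurable f μ) :
    (eLpNorm f 2 μ).toReal ^ 2 = ∫ x, f x ^ 2 ∂μ := by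
  rw [toReal_eLpNorm_two_eq_sqrt hf, Real.sq_sqrt (integral_nonneg fun x => sq_nonneg _)]

theorem integral_abs_mul_le_toReal_eLpNorm_two (hf : MemLp f 2 μ) (hg : MemLp g 2 μ) :
    ∫ x, |f x * g x| ∂μ ≤ (eLpNorm f 2 μ).toReal * (eLpNorm g 2 μ).toReal := by
  have := integral_mul_norm_le_Lp_mul_Lq Real.HolderConjugate.two_two
    (by simpa using hf) (by simpa using hg)
  simpa [abs_mul, toReal_eLpNorm_two_eq_sqrt hf.1, toReal_eLpNorm_two_eq_sqrt hg.1,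
    Real.sqrt_eq_rpow, one_div] using this

theorem integral_sq_add_two_mul_abs_mul_le (hf : MemLp f 2 μ) (hg : MemLp g 2 μ) :
    ∫ x, (f x ^ 2 + 2 * |f x * g x|) ∂μ ≤
      2 * (eLpNorm f 2 μ).toReal * ((eLpNorm f 2 μ).toReal + (eLpNorm g 2 μ).toReal) := by
  have hfg : Integrable (fun x => f x * g x) μ := hf.integrable_mul hg
  rw [integral_add hf.integrable_sq (hfg.abs.const_mul 2), integral_const_mul,
    ← sq_toReal_eLpNorm_two hf.1]
  nlinarith [integral_abs_mul_le_toReal_eLpNorm_two hf hg, sq_nonneg (eLpNorm f 2 μ).toReal]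

end L2

section Product
variable {α β : Type*} [MeasurableSpace α] [MeasurableSpace β] {μ : Measure α} {ν : Measure β}
  [SFinite μ] [SFinite ν]

theorem abs_integral_mul_mul_le_of_sq_le {a : α → ℝ} {b : β → ℝ} {f g h : α × β → ℝ}
    (ha : Integrable a μ) (hb : Integrable b ν) (ha0 : 0 ≤ a) (hb0 : 0 ≤ b)
    (hf : ∀ᵐ y ∂ν, ∀ x, f (x, y) ^ 2 ≤ b y) (hg : ∀ᵐ x ∂μ, ∀ y, g (x, y) ^ 2 ≤ a x)
    (hh : MemLp h 2 (μ.prod ν)) :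
    |∫ z, f z * g z * h z ∂μ.prod ν| ≤
      √((∫ x, a x ∂μ) * ∫ y, b y ∂ν) * (eLpNorm h 2 (μ.prod ν)).toReal := by
  set Φ : α × β → ℝ := fun z => √(a z.1 * b z.2)
  have hΦsq : ∀ z, Φ z ^ 2 = a z.1 * b z.2 := fun z =>
    Real.sq_sqrt (mul_nonneg (ha0 z.1) (hb0 z.2))
  have hΦ : MemLp Φ 2 (μ.prod ν) := by
    refine (memLp_two_iff_integrable_sq <| Real.continuous_sqrt.comp_aestronglyMeasurable
      (ha.1.comp_fst.mul hb.1.comp_snd)).2 ?_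
    exact (ha.mul_prod hb).congr (ae_of_all _ fun z => (hΦsq z).symm)
  have hdom : ∀ᵐ z ∂μ.prod ν, ‖f z * g z * h z‖ ≤ |Φ z * h z| := by
    filter_upwards [Measure.quasiMeasurePreserving_snd.ae hf,
      Measure.quasiMeasurePreserving_fst.ae hg] with z hfz hgz
    have hfg : |f z * g z| ≤ Φ z := Real.abs_le_sqrt <| by
      rw [mul_pow, mul_comm (a z.1)]
      exact mul_le_mul (hfz z.1) (hgz z.2) (sq_nonneg _) (hb0 z.2)
    rw [Real.norm_eq_abs, abs_mul, abs_mul (Φ z), abs_of_nonneg (Real.sqrt_nonneg _)]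
    exact mul_le_mul_of_nonneg_right hfg (abs_nonneg _)
  calc |∫ z, f z * g z * h z ∂μ.prod ν|
      ≤ ∫ z, |Φ z * h z| ∂μ.prod ν :=
        norm_integral_le_of_norm_le (hΦ.integrable_mul hh).abs hdom
    _ ≤ (eLpNorm Φ 2 (μ.prod ν)).toReal * (eLpNorm h 2 (μ.prod ν)).toReal :=
        integral_abs_mul_le_toReal_eLpNorm_two hΦ hh
    _ = √((∫ x, a x ∂μ) * ∫ y, b y ∂ν) * (eLpNorm h 2 (μ.prod ν)).toReal := by
        rw [toReal_eLpNorm_two_eq_sqrt hΦ.1, ← integral_prod_mul]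
        simp only [hΦsq]

end Product

section OneDim
variable {u u' : ℝ → ℝ}

theorem hasDerivAt_sq_of_hasDerivAt {x : ℝ} (hd : HasDerivAt u (u' x) x) :
    HasDerivAt (fun s => u s ^ 2) (2 * (u x * u' x)) x := by
  simpa [mul_assoc, mul_comm, mul_left_comm] using hd.fun_pow 2

theorem sq_le_sq_add_intervalIntegral_abs_mul_deriv {a b x t : ℝ}
    (hx : x ∈ Icc a b) (ht : t ∈ Icc a b) (hd : ∀ s ∈ Icc a b, HasDerivAt u (u' s) s)
    (hi : IntervalIntegrable (fun s => u s * u' s) volume a b) :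
    u x ^ 2 ≤ u t ^ 2 + ∫ s in a..b, 2 * |u s * u' s| := by
  have hab : a ≤ b := hx.1.trans hx.2
  have hsub : [[t, x]] ⊆ [[a, b]] := by
    rw [uIcc_of_le hab]; exact uIcc_subset_Icc ht hx
  have hftc : u x ^ 2 - u t ^ 2 = ∫ s in t..x, 2 * (u s * u' s) :=
    (intervalIntegral.integral_eq_sub_of_hasDerivAt
      (fun s hs => hasDerivAt_sq_of_hasDerivAt (hd s (uIcc_of_le hab ▸ hsub hs)))
      ((hi.mono_set hsub).const_mul 2)).symm
  have hbound : ∫ s in t..x, 2 * (u s * u' s) ≤ ∫ s in a..b, 2 * |u s * u' s| :=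
    calc ∫ s in t..x, 2 * (u s * u' s)
        ≤ ‖∫ s in t..x, 2 * (u s * u' s)‖ := Real.le_norm_self _
      _ ≤ ∫ s in Ι t x, ‖2 * (u s * u' s)‖ := intervalIntegral.norm_integral_le_integral_norm_uIoc
      _ ≤ ∫ s in Ι a b, ‖2 * (u s * u' s)‖ :=
          setIntegral_mono_set ((hi.def'.const_mul 2).norm)
            (ae_of_all _ fun _ => norm_nonneg _)
            (uIoc_subset_uIoc_of_uIcc_subset_uIcc hsub).eventuallyLE
      _ = ∫ s in a..b, 2 * |u s * u' s| := by
          simp [intervalIntegral.integral_of_le hab, uIoc_of_le hab, abs_mul]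
  linarith

theorem sq_le_intervalIntegral_sq_add_abs_mul_deriv_of_periodic (hper : Function.Periodic u 1)
    (hd : ∀ s, HasDerivAt u (u' s) s)
    (hi : IntervalIntegrable (fun s => u s * u' s) volume 0 1) (x : ℝ) :
    u x ^ 2 ≤ (∫ s in (0:ℝ)..1, u s ^ 2) + ∫ s in (0:ℝ)..1, 2 * |u s * u' s| := by
  have hcont : Continuous fun s => u s ^ 2 :=
    (continuous_iff_continuousAt.2 fun s => (hd s).continuousAt).pow 2
  obtain ⟨x', hx', hxx'⟩ := hper.exists_mem_Ico₀ one_pos x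
  obtain ⟨t, ht, hmin⟩ :=
    isCompact_Icc.exists_isMinOn (nonempty_Icc.2 zero_le_one) hcont.continuousOn
  have hmin_le : u t ^ 2 ≤ ∫ s in (0:ℝ)..1, u s ^ 2 := by
    simpa using intervalIntegral.integral_mono_on (μ := volume) zero_le_one intervalIntegrable_const
      (hcont.intervalIntegrable 0 1) fun s hs => hmin hs
  have hosc := sq_le_sq_add_intervalIntegral_abs_mul_deriv (Ico_subset_Icc_self hx') ht
    (fun s _ => hd s) hi
  rw [hxx']
  linarith

theorem sq_le_integral_abs_mul_deriv {v v' : ℝ → ℝ} (hd : ∀ s, HasDerivAt v (v' s) s)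
    (hv : Integrable (fun s => v s ^ 2)) (hvv' : Integrable (fun s => v s * v' s)) (y : ℝ) :
    v y ^ 2 ≤ ∫ s, 2 * |v s * v' s| := by
  have hd2 : ∀ s ∈ Iic y, HasDerivAt (fun s => v s ^ 2) (2 * (v s * v' s)) s :=
    fun s _ => hasDerivAt_sq_of_hasDerivAt (hd s)
  have hint : Integrable (fun s => 2 * (v s * v' s)) := hvv'.const_mul 2
  have hlim := tendsto_zero_of_hasDerivAt_of_integrableOn_Iic hd2 hint.integrableOn hv.integrableOn
  calc v y ^ 2 = ∫ s in Iic y, 2 * (v s * v' s) := by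
        rw [integral_Iic_of_hasDerivAt_of_tendsto' hd2 hint.integrableOn hlim, sub_zero]
    _ ≤ ∫ s in Iic y, 2 * |v s * v' s| :=
        setIntegral_mono hint.integrableOn (hvv'.abs.const_mul 2).integrableOn
          fun s => by gcongr; exact le_abs_self _
    _ ≤ ∫ s, 2 * |v s * v' s| :=
        setIntegral_le_integral (hvv'.abs.const_mul 2) (ae_of_all _ fun s => by positivity)

end OneDim

section Slices
variable {α : Type*} [MeasurableSpace α]

theorem ae_sq_le_integral_Ioc_of_periodic {ν : Measure α} [SFinite ν] {f f1 : ℝ × α → ℝ}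
    (hper : ∀ x : ℝ × α, f (x.1 + 1, x.2) = f x)
    (hd : ∀ x : ℝ × α, HasDerivAt (fun t => f (t, x.2)) (f1 x) x.1)
    (hi : Integrable (fun x => f x * f1 x) ((volume.restrict (Ioc 0 1)).prod ν)) :
    ∀ᵐ y ∂ν, ∀ t, f (t, y) ^ 2 ≤ ∫ s in Ioc 0 1, (f (s, y) ^ 2 + 2 * |f (s, y) * f1 (s, y)|) := by
  filter_upwards [hi.prod_left_ae] with y hy t
  have hyi : IntervalIntegrable (fun s => f (s, y) * f1 (s, y)) volume 0 1 :=
    (intervalIntegrable_iff_integrableOn_Ioc_of_le zero_le_one).2 hy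
  have hcont : Continuous fun s => f (s, y) ^ 2 :=
    (continuous_iff_continuousAt.2 fun s => (hd (s, y)).continuousAt).pow 2
  rw [integral_add hcont.integrableOn_Ioc (hy.abs.const_mul 2),
    ← intervalIntegral.integral_of_le zero_le_one, ← intervalIntegral.integral_of_le zero_le_one]
  exact sq_le_intervalIntegral_sq_add_abs_mul_deriv_of_periodic (fun s => hper (s, y))
    (fun s => hd (s, y)) hyi t

theorem ae_sq_le_integral_of_hasDerivAt_snd {μ : Measure α} [SFinite μ] {g g2 : α × ℝ → ℝ}
    (hd : ∀ x : α × ℝ, HasDerivAt (fun s => g (x.1, s)) (g2 x) x.2)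
    (hg : Integrable (fun x => g x ^ 2) (μ.prod volume))
    (hgg2 : Integrable (fun x => g x * g2 x) (μ.prod volume)) :
    ∀ᵐ t ∂μ, ∀ y, g (t, y) ^ 2 ≤ ∫ s, 2 * |g (t, s) * g2 (t, s)| := by
  filter_upwards [hg.prod_right_ae, hgg2.prod_right_ae] with t ht htt y
  exact sq_le_integral_abs_mul_deriv (fun s => hd (t, s)) ht htt y

end Slices

/-- Anisotropic upper bound for the triple product on Ω = 𝕋 × ℝ:
|∫ fgh| ≤ C ‖f‖^{1/2} (‖f‖+‖∂₁f‖)^{1/2} ‖g‖^{1/2} ‖∂₂g‖^{1/2} ‖h‖. -/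
theorem triple_product_anisotropic :
    ∃ C : ℝ, 0 < C ∧ ∀ (f g h f1 g2 : ℝ × ℝ → ℝ),
      (∀ x : ℝ × ℝ, f (x.1 + 1, x.2) = f x) →
      (∀ x : ℝ × ℝ, g (x.1 + 1, x.2) = g x) →
      (∀ x : ℝ × ℝ, h (x.1 + 1, x.2) = h x) →
      (∀ x : ℝ × ℝ, HasDerivAt (fun t => f (t, x.2)) (f1 x) x.1) →
      (∀ x : ℝ × ℝ, HasDerivAt (fun s => g (x.1, s)) (g2 x) x.2) →
      MemLp f 2 μΩ → MemLp g 2 μΩ → MemLp h 2 μΩ →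
      MemLp f1 2 μΩ → MemLp g2 2 μΩ →
      |∫ x, f x * g x * h x ∂μΩ| ≤
        C * Real.sqrt ((eLpNorm f 2 μΩ).toReal) *
          Real.sqrt ((eLpNorm f 2 μΩ).toReal + (eLpNorm f1 2 μΩ).toReal) *
          Real.sqrt ((eLpNorm g 2 μΩ).toReal) * Real.sqrt ((eLpNorm g2 2 μΩ).toReal) *
          (eLpNorm h 2 μΩ).toReal := by
  refine ⟨2, two_pos, fun f g h f1 g2 hfp _ _ hdf hdg hf hg hh hf1 hg2 => ?_⟩
  set nf := (eLpNorm f 2 μΩ).toReal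
  set nf1 := (eLpNorm f1 2 μΩ).toReal
  set ng := (eLpNorm g 2 μΩ).toReal
  set ng2 := (eLpNorm g2 2 μΩ).toReal
  set p : ℝ × ℝ → ℝ := fun x => f x ^ 2 + 2 * |f x * f1 x|
  set q : ℝ × ℝ → ℝ := fun x => 2 * |g x * g2 x|
  have hff1 : Integrable (fun x => f x * f1 x) μΩ := hf.integrable_mul hf1
  have hgg2 : Integrable (fun x => g x * g2 x) μΩ := hg.integrable_mul hg2
  have hp : Integrable p μΩ := hf.integrable_sq.add (hff1.abs.const_mul 2)
  have hq : Integrable q μΩ := hgg2.abs.const_mul 2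
  have hP : ∫ x, p x ∂μΩ ≤ 2 * nf * (nf + nf1) := integral_sq_add_two_mul_abs_mul_le hf hf1
  have hQ : ∫ x, q x ∂μΩ ≤ 2 * ng * ng2 := by
    rw [integral_const_mul]
    nlinarith [integral_abs_mul_le_toReal_eLpNorm_two hg hg2]
  calc |∫ x, f x * g x * h x ∂μΩ|
      ≤ √((∫ t, ∫ y, q (t, y) ∂volume ∂volume.restrict (Ioc 0 1)) *
          ∫ y, ∫ t, p (t, y) ∂volume.restrict (Ioc 0 1)) * (eLpNorm h 2 μΩ).toReal :=
        abs_integral_mul_mul_le_of_sq_le hq.integral_prod_left hp.integral_prod_right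
          (fun _ => integral_nonneg fun _ => by positivity)
          (fun _ => integral_nonneg fun _ => by positivity)
          (ae_sq_le_integral_Ioc_of_periodic hfp hdf hff1)
          (ae_sq_le_integral_of_hasDerivAt_snd hdg hg.integrable_sq hgg2) hh
    _ = √((∫ x, q x ∂μΩ) * ∫ x, p x ∂μΩ) * (eLpNorm h 2 μΩ).toReal := by
        rw [μΩ, integral_prod _ hq, integral_prod_symm _ hp]
    _ ≤ √((2 * ng * ng2) * (2 * nf * (nf + nf1))) * (eLpNorm h 2 μΩ).toReal := by
        gcongr
    _ = 2 * √nf * √(nf + nf1) * √ng * √ng2 * (eLpNorm h 2 μΩ).toReal := by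
        rw [show 2 * ng * ng2 * (2 * nf * (nf + nf1)) = 2 ^ 2 * nf * (nf + nf1) * ng * ng2 by ring,
          Real.sqrt_mul' _ ENNReal.toReal_nonneg, Real.sqrt_mul' _ ENNReal.toReal_nonneg,
          Real.sqrt_mul' _ (by positivity), Real.sqrt_mul' _ ENNReal.toReal_nonneg,
          Real.sqrt_sq zero_le_two]
end

section
/- Let Ω = 𝕋 × ℝ. There is a constant C such that for any f, g, h ∈ L²(Ω) with ∂₁f̃ ∈ L²(Ω) and ∂₂g ∈ L²(Ω), |∫_Ω f̃ g h dx| ≤ C ‖∂₁f̃‖_{L²} ‖g‖_{L²}^{1/2} ‖∂₂g‖_{L²}^{1/2} ‖h‖_{L²}, where f̃ is the oscillation part of f. -/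
/-!
On each horizontal line `f̃(·, y)` is periodic with mean zero, so it vanishes somewhere on every
period and `|f̃(x, y)| ≤ ‖∂₁f̃(·, y)‖_{L¹(𝕋)} ≤ ‖∂₁f̃(·, y)‖_{L²(𝕋)} =: A(y)`. On each vertical
line Agmon's inequality `g(x, y)² ≤ 2 ‖g(x, ·)‖_{L²} ‖∂₂g(x, ·)‖_{L²} =: B(x)²` holds. Hence
`∫ |f̃ g h| ≤ ∫∫ A(y) B(x) |h(x, y)| ≤ ‖A‖ ‖B‖ ‖h‖` by Cauchy–Schwarz in `y` and then in `x`;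
Fubini gives `‖A‖ = ‖∂₁f̃‖`, and one more Cauchy–Schwarz gives `‖B‖² ≤ 2 ‖g‖ ‖∂₂g‖`.
-/

open MeasureTheory Set

open Filter Function
open scoped ENNReal Topology

section CauchySchwarz

variable {α : Type*} [MeasurableSpace α] {μ : Measure α} {f g : α → ℝ≥0∞}

theorem lintegral_mul_le_eLpNorm_two_mul (hf : AEMeasurable f μ) (hg : AEMeasurable g μ) :
    ∫⁻ x, f x * g x ∂μ ≤ eLpNorm f 2 μ * eLpNorm g 2 μ := by
  have h := ENNReal.lintegral_mul_le_Lp_mul_Lq μ Real.HolderConjugate.two_two hf hg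
  simpa [eLpNorm_eq_lintegral_rpow_enorm_toReal two_ne_zero ENNReal.ofNat_ne_top] using h

theorem eLpNorm_two_rpow_half_const_mul_mul_le (c : ℝ≥0∞) (hf : AEMeasurable f μ)
    (hg : AEMeasurable g μ) :
    eLpNorm (fun x ↦ (c * f x * g x) ^ (2⁻¹ : ℝ)) 2 μ ≤
      (c * eLpNorm f 2 μ * eLpNorm g 2 μ) ^ (2⁻¹ : ℝ) := by
  rw [eLpNorm_eq_lintegral_rpow_enorm_toReal two_ne_zero ENNReal.ofNat_ne_top]
  simp only [enorm_eq_self, ENNReal.toReal_ofNat, one_div, mul_assoc]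
  simp_rw [ENNReal.rpow_inv_rpow two_ne_zero]
  rw [lintegral_const_mul'' (f := fun x ↦ f x * g x) c (hf.mul hg)]
  gcongr
  exact lintegral_mul_le_eLpNorm_two_mul hf hg

end CauchySchwarz

section Fubini

variable {α β ε : Type*} [MeasurableSpace α] [MeasurableSpace β] {μ : Measure α} {ν : Measure β}
  [SFinite ν] [TopologicalSpace ε] [ContinuousENorm ε] {p : ℝ≥0∞}

theorem eLpNorm_eLpNorm_prodMk_left {f : α × β → ε} (hf : AEStronglyMeasurable f (μ.prod ν))
    (hp0 : p ≠ 0) (hp : p ≠ ∞) :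
    eLpNorm (fun x ↦ eLpNorm (fun y ↦ f (x, y)) p ν) p μ = eLpNorm f p (μ.prod ν) := by
  have hp' : p.toReal ≠ 0 := ENNReal.toReal_ne_zero.2 ⟨hp0, hp⟩
  simp only [eLpNorm_eq_lintegral_rpow_enorm_toReal hp0 hp, enorm_eq_self,
    ENNReal.rpow_inv_rpow hp', one_div]
  rw [lintegral_prod _ (hf.enorm.pow_const _)]

theorem eLpNorm_eLpNorm_prodMk_right [SFinite μ] {f : α × β → ε}
    (hf : AEStronglyMeasurable f (μ.prod ν)) (hp0 : p ≠ 0) (hp : p ≠ ∞) :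
    eLpNorm (fun y ↦ eLpNorm (fun x ↦ f (x, y)) p μ) p ν = eLpNorm f p (μ.prod ν) :=
  (eLpNorm_eLpNorm_prodMk_left (f := f ∘ Prod.swap) hf.prod_swap hp0 hp).trans
    (eLpNorm_comp_measurePreserving hf Measure.measurePreserving_swap)

theorem MeasureTheory.MemLp.ae_memLp_two_prodMk_left [SFinite μ] {F : Type*}
    [NormedAddCommGroup F] {f : α × β → F} (hf : MemLp f 2 (μ.prod ν)) :
    ∀ᵐ x ∂μ, MemLp (fun y ↦ f (x, y)) 2 ν := by
  filter_upwards [hf.integrable_norm_pow two_ne_zero |>.prod_right_ae,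
    hf.aestronglyMeasurable.prodMk_left] with x hx hmeas
  exact (memLp_two_iff_integrable_sq_norm hmeas).2 hx

theorem MeasureTheory.AEStronglyMeasurable.eLpNorm_prodMk_left {f : α × β → ε}
    (hf : AEStronglyMeasurable f (μ.prod ν)) (hp0 : p ≠ 0) (hp : p ≠ ∞) :
    AEMeasurable (fun x ↦ eLpNorm (fun y ↦ f (x, y)) p ν) μ := by
  simp only [eLpNorm_eq_lintegral_rpow_enorm_toReal hp0 hp]
  exact (hf.enorm.pow_const _).lintegral_prod_right'.pow_const _

theorem MeasureTheory.AEStronglyMeasurable.eLpNorm_prodMk_right [SFinite μ] {f : α × β → ε}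
    (hf : AEStronglyMeasurable f (μ.prod ν)) (hp0 : p ≠ 0) (hp : p ≠ ∞) :
    AEMeasurable (fun y ↦ eLpNorm (fun x ↦ f (x, y)) p μ) ν :=
  hf.prod_swap.eLpNorm_prodMk_left hp0 hp

theorem lintegral_prod_mul_mul_le {a b c : α × β → ℝ≥0∞} {A : β → ℝ≥0∞}
    {B : α → ℝ≥0∞} (hA : AEMeasurable A ν) (hB : AEMeasurable B μ)
    (hc : AEMeasurable c (μ.prod ν)) (ha : ∀ᵐ x ∂μ, ∀ᵐ y ∂ν, a (x, y) ≤ A y)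
    (hb : ∀ᵐ x ∂μ, ∀ᵐ y ∂ν, b (x, y) ≤ B x) :
    ∫⁻ z, a z * b z * c z ∂(μ.prod ν) ≤
      eLpNorm A 2 ν * eLpNorm B 2 μ * eLpNorm c 2 (μ.prod ν) := by
  set C : α → ℝ≥0∞ := fun x ↦ eLpNorm (fun y ↦ c (x, y)) 2 ν
  have hC : AEMeasurable C μ :=
    hc.aestronglyMeasurable.eLpNorm_prodMk_left two_ne_zero ENNReal.ofNat_ne_top
  have hsection : ∀ᵐ x ∂μ, ∫⁻ y, a (x, y) * b (x, y) * c (x, y) ∂ν ≤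
      B x * (eLpNorm A 2 ν * C x) := by
    filter_upwards [ha, hb, hc.aestronglyMeasurable.prodMk_left] with x hax hbx hcx
    calc ∫⁻ y, a (x, y) * b (x, y) * c (x, y) ∂ν
        ≤ ∫⁻ y, B x * (A y * c (x, y)) ∂ν := by
          refine lintegral_mono_ae ?_
          filter_upwards [hax, hbx] with y hay hby
          calc a (x, y) * b (x, y) * c (x, y) ≤ A y * B x * c (x, y) := by gcongr
            _ = B x * (A y * c (x, y)) := by ring
      _ = B x * ∫⁻ y, A y * c (x, y) ∂ν := lintegral_const_mul'' _ (hA.mul hcx.aemeasurable)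
      _ ≤ B x * (eLpNorm A 2 ν * C x) := by
          gcongr; exact lintegral_mul_le_eLpNorm_two_mul hA hcx.aemeasurable
  calc ∫⁻ z, a z * b z * c z ∂(μ.prod ν)
      ≤ ∫⁻ x, ∫⁻ y, a (x, y) * b (x, y) * c (x, y) ∂ν ∂μ := lintegral_prod_le _
    _ ≤ ∫⁻ x, eLpNorm A 2 ν * (B x * C x) ∂μ := by
        refine lintegral_mono_ae ?_
        filter_upwards [hsection] with x hx
        exact hx.trans_eq (by ring)
    _ = eLpNorm A 2 ν * ∫⁻ x, B x * C x ∂μ := lintegral_const_mul'' _ (hB.mul hC)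
    _ ≤ eLpNorm A 2 ν * (eLpNorm B 2 μ * eLpNorm C 2 μ) := by
        gcongr; exact lintegral_mul_le_eLpNorm_two_mul hB hC
    _ = eLpNorm A 2 ν * eLpNorm B 2 μ * eLpNorm c 2 (μ.prod ν) := by
        rw [eLpNorm_eLpNorm_prodMk_left hc.aestronglyMeasurable two_ne_zero ENNReal.ofNat_ne_top,
          mul_assoc]

end Fubini

section OneDimensional

variable {v v' : ℝ → ℝ}

theorem measurable_of_hasDerivAt (hd : ∀ t, HasDerivAt v (v' t) t) : Measurable v' := by
  rw [show v' = deriv v from funext fun t ↦ (hd t).deriv.symm]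
  exact measurable_deriv v

theorem Function.Periodic.hasDerivAt_periodic {T : ℝ} (hper : Periodic v T)
    (hd : ∀ t, HasDerivAt v (v' t) t) : Periodic v' T := by
  intro t
  have h := (hd (t + T)).comp_add_const t T
  rw [show (fun s ↦ v (s + T)) = v from funext hper] at h
  exact h.unique (hd t)

theorem abs_le_integral_abs_deriv_of_periodic {T : ℝ} (hT : 0 < T) (hper : Periodic v T)
    (hd : ∀ t, HasDerivAt v (v' t) t) (hmean : ∫ t in 0..T, v t = 0)
    (hi : IntervalIntegrable v' volume 0 T) (x : ℝ) :
    |v x| ≤ ∫ t in 0..T, |v' t| := by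
  have hv'per : Periodic v' T := hper.hasDerivAt_periodic hd
  have hi' : ∀ a b, IntervalIntegrable v' volume a b := hv'per.intervalIntegrable₀ hT.ne' hi
  have hmean' : ∫ t in x - T..x, v t = 0 := by
    simpa [hmean] using hper.intervalIntegral_add_eq (x - T) 0
  obtain ⟨t₀, ht₀, hv0⟩ : ∃ t₀ ∈ uIoo (x - T) x, v t₀ = 0 := by
    have hc : Continuous v := continuous_iff_continuousAt.2 fun t ↦ (hd t).continuousAt
    simpa [interval_average_eq, hmean'] using
      exists_eq_interval_average (sub_lt_self x hT).ne hc.continuousOn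
  rw [uIoo_of_le (sub_lt_self x hT).le] at ht₀
  calc |v x| = |∫ t in t₀..x, v' t| := by
        rw [intervalIntegral.integral_eq_sub_of_hasDerivAt (fun t _ ↦ hd t) (hi' _ _), hv0,
          sub_zero]
    _ ≤ ∫ t in t₀..x, |v' t| := intervalIntegral.abs_integral_le_integral_abs ht₀.2.le
    _ ≤ ∫ t in x - T..x, |v' t| :=
        intervalIntegral.integral_mono_interval ht₀.1.le ht₀.2.le le_rfl
          (Eventually.of_forall fun _ ↦ abs_nonneg _) (hi' _ _).abs
    _ = ∫ t in 0..T, |v' t| := by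
        simpa using (hv'per.comp fun s ↦ |s|).intervalIntegral_add_eq (x - T) 0

theorem enorm_le_eLpNorm_one_deriv_of_periodic {T : ℝ} (hT : 0 < T) (hper : Periodic v T)
    (hd : ∀ t, HasDerivAt v (v' t) t) (hmean : ∫ t in 0..T, v t = 0) (x : ℝ) :
    ‖v x‖ₑ ≤ eLpNorm v' 1 (volume.restrict (Ioc 0 T)) := by
  by_cases hi : IntegrableOn v' (Ioc 0 T)
  · rw [eLpNorm_one_eq_lintegral_enorm, ← ofReal_integral_norm_eq_lintegral_enorm hi,
      Real.enorm_eq_ofReal_abs]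
    refine ENNReal.ofReal_le_ofReal ?_
    simpa [intervalIntegral.integral_of_le hT.le] using abs_le_integral_abs_deriv_of_periodic hT
      hper hd hmean ((intervalIntegrable_iff_integrableOn_Ioc_of_le hT.le).2 hi) x
  · rw [IntegrableOn, ← memLp_one_iff_integrable, MemLp, not_and, not_lt, top_le_iff] at hi
    rw [hi (measurable_of_hasDerivAt hd).aestronglyMeasurable]
    exact le_top

theorem sq_le_two_mul_integral_abs_mul (hd : ∀ s, HasDerivAt v (v' s) s) (hv : MemLp v 2)
    (hi : Integrable fun s ↦ v s * v' s) (x : ℝ) :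
    v x ^ 2 ≤ 2 * ∫ s, |v s * v' s| := by
  have hd2 : ∀ s, HasDerivAt (fun s ↦ v s ^ 2) (2 * (v s * v' s)) s := fun s ↦
    ((hasDerivAt_pow 2 (v s)).comp s (hd s)).congr_deriv (by push_cast; ring)
  have hi2 : Integrable fun s ↦ 2 * (v s * v' s) := hi.const_mul 2
  have hlim : Tendsto (fun s ↦ v s ^ 2) atBot (𝓝 0) :=
    tendsto_zero_of_hasDerivAt_of_integrableOn_Iic (a := x) (fun s _ ↦ hd2 s) hi2.integrableOn
      hv.integrable_sq.integrableOn
  calc v x ^ 2 = ∫ s in Iic x, 2 * (v s * v' s) := by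
        rw [integral_Iic_of_hasDerivAt_of_tendsto' (fun s _ ↦ hd2 s) hi2.integrableOn hlim,
          sub_zero]
    _ ≤ ∫ s in Iic x, |2 * (v s * v' s)| :=
        integral_mono hi2.integrableOn hi2.abs.integrableOn fun s ↦ le_abs_self _
    _ ≤ ∫ s, |2 * (v s * v' s)| :=
        setIntegral_le_integral hi2.abs (Eventually.of_forall fun s ↦ abs_nonneg _)
    _ = 2 * ∫ s, |v s * v' s| := by
        simp only [abs_mul, abs_two, integral_const_mul]

theorem enorm_le_rpow_two_mul_eLpNorm_mul_eLpNorm_deriv (hd : ∀ s, HasDerivAt v (v' s) s)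
    (hv : MemLp v 2) (x : ℝ) :
    ‖v x‖ₑ ≤ (2 * eLpNorm v 2 * eLpNorm v' 2) ^ (2⁻¹ : ℝ) := by
  have hv' : AEMeasurable v' := (measurable_of_hasDerivAt hd).aemeasurable
  have hholder : eLpNorm (fun s ↦ v s * v' s) 1 ≤ eLpNorm v 2 * eLpNorm v' 2 := by
    have h := lintegral_mul_le_eLpNorm_two_mul hv.aestronglyMeasurable.enorm hv'.enorm
    rw [eLpNorm_enorm, eLpNorm_enorm] at h
    rw [eLpNorm_one_eq_lintegral_enorm]
    simpa only [enorm_mul] using h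
  have hsq : ‖v x‖ₑ ^ (2 : ℝ) ≤ 2 * eLpNorm (fun s ↦ v s * v' s) 1 := by
    by_cases hi : Integrable fun s ↦ v s * v' s
    · rw [eLpNorm_one_eq_lintegral_enorm, ← ofReal_integral_norm_eq_lintegral_enorm hi,
        Real.enorm_eq_ofReal_abs, ENNReal.ofReal_rpow_of_nonneg (abs_nonneg _) zero_le_two,
        ← ENNReal.ofReal_ofNat 2, ← ENNReal.ofReal_mul zero_le_two]
      refine ENNReal.ofReal_le_ofReal ?_
      simpa only [Real.rpow_two, sq_abs, Real.norm_eq_abs] using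
        sq_le_two_mul_integral_abs_mul hd hv hi x
    · rw [← memLp_one_iff_integrable, MemLp, not_and, not_lt, top_le_iff] at hi
      rw [hi (hv.aestronglyMeasurable.mul hv'.aestronglyMeasurable), ENNReal.mul_top two_ne_zero]
      exact le_top
  rw [ENNReal.le_rpow_inv_iff zero_lt_two, mul_assoc]
  exact hsq.trans (by gcongr)

end OneDimensional

section Oscillation

variable {f : ℝ × ℝ → ℝ}

theorem periodic_osc (hper : ∀ x : ℝ × ℝ, f (x.1 + 1, x.2) = f x) (y : ℝ) :
    Periodic (fun t ↦ osc f (t, y)) 1 := fun t ↦ by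
  simp only [osc, hper (t, y)]

theorem intervalIntegral_osc_eq_zero {y : ℝ} (hf : IntegrableOn (fun t ↦ f (t, y)) (Ioc 0 1)) :
    ∫ t in 0..1, osc f (t, y) = 0 := by
  have hf' : IntervalIntegrable (fun t ↦ f (t, y)) volume 0 1 :=
    (intervalIntegrable_iff_integrableOn_Ioc_of_le zero_le_one).2 hf
  simp [osc, intervalIntegral.integral_sub hf' intervalIntegrable_const, havg]

theorem lintegral_enorm_osc_mul_mul_le {g h f1 g2 : ℝ × ℝ → ℝ}
    (hfper : ∀ x : ℝ × ℝ, f (x.1 + 1, x.2) = f x)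
    (hfint : ∀ y : ℝ, IntegrableOn (fun t ↦ f (t, y)) (Ioc 0 1))
    (hf1d : ∀ x : ℝ × ℝ, HasDerivAt (fun t ↦ osc f (t, x.2)) (f1 x) x.1)
    (hg2d : ∀ x : ℝ × ℝ, HasDerivAt (fun s ↦ g (x.1, s)) (g2 x) x.2) (hg : MemLp g 2 μΩ)
    (hh : AEStronglyMeasurable h μΩ) (hf1 : AEStronglyMeasurable f1 μΩ)
    (hg2 : AEStronglyMeasurable g2 μΩ) :
    ∫⁻ z, ‖osc f z‖ₑ * ‖g z‖ₑ * ‖h z‖ₑ ∂μΩ ≤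
      eLpNorm f1 2 μΩ * (2 * eLpNorm g 2 μΩ * eLpNorm g2 2 μΩ) ^ (2⁻¹ : ℝ) * eLpNorm h 2 μΩ := by
  unfold μΩ at hg hh hf1 hg2 ⊢
  set μ₁ : Measure ℝ := volume.restrict (Ioc 0 1)
  have : IsProbabilityMeasure μ₁ := ⟨by simp [μ₁]⟩
  set A : ℝ → ℝ≥0∞ := fun y ↦ eLpNorm (fun t ↦ f1 (t, y)) 2 μ₁
  set P : ℝ → ℝ≥0∞ := fun t ↦ eLpNorm (fun y ↦ g (t, y)) 2
  set Q : ℝ → ℝ≥0∞ := fun t ↦ eLpNorm (fun y ↦ g2 (t, y)) 2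
  have hP := hg.aestronglyMeasurable.eLpNorm_prodMk_left two_ne_zero ENNReal.ofNat_ne_top
  have hQ := hg2.eLpNorm_prodMk_left two_ne_zero ENNReal.ofNat_ne_top
  have hosc : ∀ t y, ‖osc f (t, y)‖ₑ ≤ A y := fun t y ↦ by
    have hd : ∀ s, HasDerivAt (fun r ↦ osc f (r, y)) (f1 (s, y)) s := fun s ↦ hf1d (s, y)
    exact (enorm_le_eLpNorm_one_deriv_of_periodic one_pos (periodic_osc hfper y) hd
      (intervalIntegral_osc_eq_zero (hfint y)) t).trans
      (eLpNorm_le_eLpNorm_of_exponent_le one_le_two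
        (measurable_of_hasDerivAt hd).aestronglyMeasurable)
  have hagmon : ∀ᵐ t ∂μ₁, ∀ y, ‖g (t, y)‖ₑ ≤ (2 * P t * Q t) ^ (2⁻¹ : ℝ) := by
    filter_upwards [hg.ae_memLp_two_prodMk_left] with t ht y
    exact enorm_le_rpow_two_mul_eLpNorm_mul_eLpNorm_deriv (fun s ↦ hg2d (t, s)) ht y
  refine (lintegral_prod_mul_mul_le (A := A) (B := fun t ↦ (2 * P t * Q t) ^ (2⁻¹ : ℝ))
    (hf1.eLpNorm_prodMk_right two_ne_zero ENNReal.ofNat_ne_top)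
    (((hP.const_mul 2).mul hQ).pow_const _) hh.enorm
    (ae_of_all _ fun t ↦ ae_of_all _ fun y ↦ hosc t y)
    (hagmon.mono fun t ht ↦ ae_of_all _ ht)).trans ?_
  rw [eLpNorm_enorm, eLpNorm_eLpNorm_prodMk_right hf1 two_ne_zero ENNReal.ofNat_ne_top,
    ← eLpNorm_eLpNorm_prodMk_left hg.aestronglyMeasurable two_ne_zero ENNReal.ofNat_ne_top,
    ← eLpNorm_eLpNorm_prodMk_left hg2 two_ne_zero ENNReal.ofNat_ne_top]
  gcongr
  exact eLpNorm_two_rpow_half_const_mul_mul_le 2 hP hQ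

end Oscillation

/-- Anisotropic triple product bound combined with the Poincaré inequality:
|∫ f̃ g h| ≤ C ‖∂₁f̃‖ ‖g‖^{1/2} ‖∂₂g‖^{1/2} ‖h‖. -/
theorem triple_product_osc_poincare :
    ∃ C : ℝ, 0 < C ∧ ∀ (f g h f1 g2 : ℝ × ℝ → ℝ),
      (∀ x : ℝ × ℝ, f (x.1 + 1, x.2) = f x) →
      (∀ x : ℝ × ℝ, g (x.1 + 1, x.2) = g x) →
      (∀ x : ℝ × ℝ, h (x.1 + 1, x.2) = h x) →
      (∀ y : ℝ, IntegrableOn (fun t => f (t, y)) (Ioc (0:ℝ) 1)) →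
      (∀ x : ℝ × ℝ, HasDerivAt (fun t => osc f (t, x.2)) (f1 x) x.1) →
      (∀ x : ℝ × ℝ, HasDerivAt (fun s => g (x.1, s)) (g2 x) x.2) →
      MemLp (osc f) 2 μΩ → MemLp g 2 μΩ → MemLp h 2 μΩ →
      MemLp f1 2 μΩ → MemLp g2 2 μΩ →
      |∫ x, osc f x * g x * h x ∂μΩ| ≤
        C * (eLpNorm f1 2 μΩ).toReal *
          Real.sqrt ((eLpNorm g 2 μΩ).toReal) * Real.sqrt ((eLpNorm g2 2 μΩ).toReal) *
          (eLpNorm h 2 μΩ).toReal := by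
  refine ⟨√2, by positivity, fun f g h f1 g2 hfper _ _ hfint hf1d hg2d _ hg hh hf1 hg2 ↦ ?_⟩
  have hlint := lintegral_enorm_osc_mul_mul_le hfper hfint hf1d hg2d hg hh.1 hf1.1 hg2.1
  have hfin : eLpNorm f1 2 μΩ * (2 * eLpNorm g 2 μΩ * eLpNorm g2 2 μΩ) ^ (2⁻¹ : ℝ) *
      eLpNorm h 2 μΩ ≠ ∞ := by
    finiteness [hf1.2, hg.2, hg2.2, hh.2]
  calc |∫ x, osc f x * g x * h x ∂μΩ| = ‖∫ x, osc f x * g x * h x ∂μΩ‖ₑ.toReal := by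
        rw [toReal_enorm, Real.norm_eq_abs]
    _ ≤ (∫⁻ x, ‖osc f x‖ₑ * ‖g x‖ₑ * ‖h x‖ₑ ∂μΩ).toReal := by
        refine ENNReal.toReal_mono (hlint.trans_lt hfin.lt_top).ne ?_
        simpa only [enorm_mul] using enorm_integral_le_lintegral_enorm (fun x ↦ osc f x * g x * h x)
    _ ≤ (eLpNorm f1 2 μΩ * (2 * eLpNorm g 2 μΩ * eLpNorm g2 2 μΩ) ^ (2⁻¹ : ℝ) *
          eLpNorm h 2 μΩ).toReal := ENNReal.toReal_mono hfin hlint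
    _ = √2 * (eLpNorm f1 2 μΩ).toReal * √(eLpNorm g 2 μΩ).toReal *
          √(eLpNorm g2 2 μΩ).toReal * (eLpNorm h 2 μΩ).toReal := by
        rw [ENNReal.toReal_mul, ENNReal.toReal_mul, ← ENNReal.toReal_rpow, ENNReal.toReal_mul,
          ENNReal.toReal_mul, ENNReal.toReal_ofNat, inv_eq_one_div, ← Real.sqrt_eq_rpow,
          Real.sqrt_mul (by positivity), Real.sqrt_mul zero_le_two]
        ring
end
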